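/- arXiv:2102.05093 — 4 statements merged into one kernel-verified Lean document; each statement's English description precedes it below -/
import Mathlib

section
/- Let L ∈ (2π, 4π), set ε_L := (2π/L)² − (2π/L)⁴, B := (4π/L)⁴ − (4π/L)², M₁ := 12 B L⁴/π⁴, and let ε > 0 satisfy ε_L ≤ ε and 3 L⁴ ε ≤ π⁴ M₁ (equivalently L⁴ε²/(4π⁴) ≤ M₁ε/12). Then for all a, b ∈ ℝ with a² + b² ≥ M₁ ε / 6, one has (ε_L/2 − ε) a² − 2B b² − (L²εB/π²) b < 0. -/
open Real

/-- The cross term is absorbed via `B (3b + Cε)² ≥ 0`, which leaves `-(ε/2)a² - (B/2)b² + BC²ε²/6`;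
since `ε ≤ 4B` this is at most `-(ε/8)(a² + b²) + BC²ε²/6`, and the radius bound makes it negative. -/
theorem quadratic_form_neg_of_sq_add_sq_ge {e ε B C a b : ℝ} (hB : 0 < B) (hC : C ≠ 0)
    (hε : 0 < ε) (he : e ≤ ε) (hεB : ε ≤ 4 * B) (hab : 2 * B * C ^ 2 * ε ≤ a ^ 2 + b ^ 2) :
    (e / 2 - ε) * a ^ 2 - 2 * B * b ^ 2 - C * ε * B * b < 0 := by
  have hcross : -(C * ε * B * b) ≤ 3 / 2 * B * b ^ 2 + B * C ^ 2 * ε ^ 2 / 6 := by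
    nlinarith [mul_nonneg hB.le (sq_nonneg (3 * b + C * ε))]
  have hpos : 0 < B * C ^ 2 * ε ^ 2 := by positivity
  calc (e / 2 - ε) * a ^ 2 - 2 * B * b ^ 2 - C * ε * B * b
      ≤ -(ε / 2) * a ^ 2 - B / 2 * b ^ 2 + B * C ^ 2 * ε ^ 2 / 6 := by
        nlinarith [mul_le_mul_of_nonneg_right he (sq_nonneg a)]
    _ ≤ -(ε / 8) * (a ^ 2 + b ^ 2) + B * C ^ 2 * ε ^ 2 / 6 := by
        nlinarith [mul_le_mul_of_nonneg_right hεB (sq_nonneg b), sq_nonneg a]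
    _ ≤ -(ε / 8) * (2 * B * C ^ 2 * ε) + B * C ^ 2 * ε ^ 2 / 6 := by
        nlinarith [mul_le_mul_of_nonneg_left hab hε.le]
    _ < 0 := by nlinarith

/-- Negativity of the piece `Υ₁` of the derivative of the Lyapunov function in
Goodman's forced toy model. -/
theorem stmt_5 (L ε : ℝ) (hL₁ : 2 * π < L) (hL₂ : L < 4 * π) (hε : 0 < ε)
    (hεL : (2 * π / L) ^ 2 - (2 * π / L) ^ 4 ≤ ε)
    (hsmall : 3 * L ^ 4 * ε ≤
      π ^ 4 * (12 * ((4 * π / L) ^ 4 - (4 * π / L) ^ 2) * L ^ 4 / π ^ 4)) :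
    ∀ a b : ℝ,
      a ^ 2 + b ^ 2 ≥ (12 * ((4 * π / L) ^ 4 - (4 * π / L) ^ 2) * L ^ 4 / π ^ 4) * ε / 6 →
      (((2 * π / L) ^ 2 - (2 * π / L) ^ 4) / 2 - ε) * a ^ 2
        - 2 * ((4 * π / L) ^ 4 - (4 * π / L) ^ 2) * b ^ 2
        - (L ^ 2 * ε * ((4 * π / L) ^ 4 - (4 * π / L) ^ 2) / π ^ 2) * b < 0 := by
  intro a b hab
  have hL : 0 < L := by linarith [pi_pos]
  set B := (4 * π / L) ^ 4 - (4 * π / L) ^ 2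
  have hB : 0 < B :=
    sub_pos.mpr (pow_lt_pow_right₀ ((one_lt_div hL).mpr (by linarith)) (by norm_num))
  have hεB : ε ≤ 4 * B := by
    rw [mul_div_cancel₀ _ (by positivity : π ^ 4 ≠ 0)] at hsmall
    nlinarith [pow_pos hL 4]
  have key := quadratic_form_neg_of_sq_add_sq_ge (a := a) (b := b) (C := L ^ 2 / π ^ 2) hB
    (by positivity) hε hεL hεB (le_of_eq_of_le (by ring) hab)
  convert key using 2
  ring
end

section
/- Let L₁, L₂ ∈ (2π, 4π) satisfy (2π/L₁)² + (2π/L₂)² > 1, define σ(k,j) := −((2πk/L₁)² + (2πj/L₂)²)² + (2πk/L₁)² + (2πj/L₂)², and let A := {(0,0), (±1,0), (±2,0), (0,±1), (0,±2)} ⊂ ℤ². Then there exists a finite constant K₁ > 0 such that for every (k,j) ∈ ℤ² \ A one has σ(k,j) < 0 and 1 + |k| + |j| ≤ K₁ · (−σ(k,j)); that is, the supremum of (1+|k|+|j|)/(−σ(k,j)) over (k,j) ∈ ℤ² \ A is finite and positive. -/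
open Real

/-- The Fourier symbol of the linearized Kuramoto–Sivashinsky operator `−Δ² − Δ`
on the torus `[0,L₁] × [0,L₂]`. -/
noncomputable def ksSymbol (L₁ L₂ : ℝ) (p : ℤ × ℤ) : ℝ :=
  -((2 * π * p.1 / L₁) ^ 2 + (2 * π * p.2 / L₂) ^ 2) ^ 2
    + (2 * π * p.1 / L₁) ^ 2 + (2 * π * p.2 / L₂) ^ 2

/-- The set of specially treated low and intermediate wavenumbers. -/
def ksLowModes : Set (ℤ × ℤ) :=
  {(0, 0), (1, 0), (-1, 0), (2, 0), (-2, 0), (0, 1), (0, -1), (0, 2), (0, -2)}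

/-!
Writing `a = (2π/L₁)²`, `b = (2π/L₂)²` and `q = a k² + b j²`, the symbol is `q - q²`. The
hypotheses give `a, b > 1/4` and `a + b > 1`, so off the special modes (where `|k| ≥ 3`,
`|j| ≥ 3`, or both `k, j ≠ 0`) we have `q ≥ μ := min (a + b) (min (9a) (9b)) > 1`, whence
`-σ = q (q - 1) ≥ q (μ - 1)`. Since `q ≥ min a b · (k² + j²) ≥ min a b · (1 + |k| + |j|) / 2`,
the constant `K₁ = 2 / (min a b · (μ - 1))` works.
-/

lemma ksSymbol_eq (L₁ L₂ : ℝ) (p : ℤ × ℤ) :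
    ksSymbol L₁ L₂ p =
      ((2 * π / L₁) ^ 2 * (p.1 : ℝ) ^ 2 + (2 * π / L₂) ^ 2 * (p.2 : ℝ) ^ 2)
        - ((2 * π / L₁) ^ 2 * (p.1 : ℝ) ^ 2 + (2 * π / L₂) ^ 2 * (p.2 : ℝ) ^ 2) ^ 2 := by
  unfold ksSymbol
  ring

lemma quarter_lt_sq_two_pi_div {L : ℝ} (hL : 0 < L) (hL' : L < 4 * π) :
    1 / 4 < (2 * π / L) ^ 2 := by
  have : 1 / 2 < 2 * π / L := by rw [lt_div_iff₀ hL]; linarith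
  nlinarith

lemma ksLowModes_compl_cases {p : ℤ × ℤ} (hp : p ∉ ksLowModes) :
    (p.1 = 0 ∧ 3 ≤ |p.2|) ∨ (p.2 = 0 ∧ 3 ≤ |p.1|) ∨ (p.1 ≠ 0 ∧ p.2 ≠ 0) := by
  obtain ⟨k, j⟩ := p
  simp only [ksLowModes, Set.mem_insert_iff, Set.mem_singleton_iff, Prod.mk.injEq] at hp
  rw [le_abs, le_abs]
  omega

lemma sq_le_cast_sq_of_le_abs {n k : ℤ} (hn : 0 ≤ n) (h : n ≤ |k|) :
    (n : ℝ) ^ 2 ≤ (k : ℝ) ^ 2 := by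
  have h' : (n : ℝ) ≤ |(k : ℝ)| := by exact_mod_cast h
  simpa only [sq_abs] using pow_le_pow_left₀ (by exact_mod_cast hn) h' 2

lemma min_le_of_notMem_ksLowModes {a b : ℝ} (ha : 0 ≤ a) (hb : 0 ≤ b) {p : ℤ × ℤ}
    (hp : p ∉ ksLowModes) :
    min (a + b) (min (9 * a) (9 * b)) ≤ a * (p.1 : ℝ) ^ 2 + b * (p.2 : ℝ) ^ 2 := by
  have h9a := min_le_left (9 * a) (9 * b)
  have h9b := min_le_right (9 * a) (9 * b)
  have h9 := min_le_right (a + b) (min (9 * a) (9 * b))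
  rcases ksLowModes_compl_cases hp with ⟨hk, hj⟩ | ⟨hj, hk⟩ | ⟨hk, hj⟩
  · have := sq_le_cast_sq_of_le_abs (by norm_num) hj
    simp only [hk, Int.cast_zero]
    push_cast at this
    nlinarith
  · have := sq_le_cast_sq_of_le_abs (by norm_num) hk
    simp only [hj, Int.cast_zero]
    push_cast at this
    nlinarith
  · have hk1 := sq_le_cast_sq_of_le_abs zero_le_one (Int.one_le_abs hk)
    have hj1 := sq_le_cast_sq_of_le_abs zero_le_one (Int.one_le_abs hj)
    push_cast at hk1 hj1
    nlinarith [min_le_left (a + b) (min (9 * a) (9 * b))]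

lemma one_add_abs_add_abs_le {p : ℤ × ℤ} (hp : p ≠ 0) :
    1 + |(p.1 : ℝ)| + |(p.2 : ℝ)| ≤ 2 * ((p.1 : ℝ) ^ 2 + (p.2 : ℝ) ^ 2) := by
  obtain ⟨k, j⟩ := p
  have hk : |k| ≤ k ^ 2 := by simpa only [Int.natCast_natAbs] using Int.natAbs_le_self_sq k
  have hj : |j| ≤ j ^ 2 := by simpa only [Int.natCast_natAbs] using Int.natAbs_le_self_sq j
  have hpos : 1 ≤ k ^ 2 + j ^ 2 := by
    by_cases hk0 : k = 0
    · have hj0 : j ≠ 0 := fun hj0 => hp (by simp [hk0, hj0])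
      nlinarith [Int.one_le_abs hj0, sq_abs j]
    · nlinarith [Int.one_le_abs hk0, sq_abs k, sq_nonneg j]
  have : 1 + |k| + |j| ≤ 2 * (k ^ 2 + j ^ 2) := by linarith
  exact_mod_cast this

/-- Finiteness and positivity of the constant `K₁`: outside the special modes the
symbol is negative and dominates `1 + |k| + |j|` up to a constant. -/
theorem stmt_12 (L₁ L₂ : ℝ) (hL₁ : 2 * π < L₁) (hL₁' : L₁ < 4 * π)
    (hL₂ : 2 * π < L₂) (hL₂' : L₂ < 4 * π)
    (hsum : (2 * π / L₁) ^ 2 + (2 * π / L₂) ^ 2 > 1) :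
    ∃ K₁ : ℝ, 0 < K₁ ∧
      ∀ p : ℤ × ℤ, p ∉ ksLowModes →
        ksSymbol L₁ L₂ p < 0 ∧
        1 + |(p.1 : ℝ)| + |(p.2 : ℝ)| ≤ K₁ * (-(ksSymbol L₁ L₂ p)) := by
  set a := (2 * π / L₁) ^ 2 with ha_def
  set b := (2 * π / L₂) ^ 2 with hb_def
  have ha : 1 / 4 < a := quarter_lt_sq_two_pi_div (by linarith [pi_pos]) hL₁'
  have hb : 1 / 4 < b := quarter_lt_sq_two_pi_div (by linarith [pi_pos]) hL₂'
  set μ := min (a + b) (min (9 * a) (9 * b))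
  set m := min a b
  have hμ : 1 < μ := lt_min hsum (lt_min (by linarith) (by linarith))
  have hm : 0 < m := lt_min (by linarith) (by linarith)
  refine ⟨2 / (m * (μ - 1)), by have := sub_pos.2 hμ; positivity, fun p hp => ?_⟩
  have hp0 : p ≠ 0 := by rintro rfl; exact hp (Or.inl rfl)
  rw [ksSymbol_eq, ← ha_def, ← hb_def]
  set q := a * (p.1 : ℝ) ^ 2 + b * (p.2 : ℝ) ^ 2
  have hμq : μ ≤ q := min_le_of_notMem_ksLowModes (by linarith) (by linarith) hp
  have hmq : m * ((p.1 : ℝ) ^ 2 + (p.2 : ℝ) ^ 2) ≤ q := by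
    nlinarith [min_le_left a b, min_le_right a b, sq_nonneg (p.1 : ℝ), sq_nonneg (p.2 : ℝ)]
  refine ⟨by nlinarith, ?_⟩
  calc 1 + |(p.1 : ℝ)| + |(p.2 : ℝ)| ≤ 2 * ((p.1 : ℝ) ^ 2 + (p.2 : ℝ) ^ 2) :=
        one_add_abs_add_abs_le hp0
    _ ≤ 2 * q / m := by rw [le_div_iff₀ hm]; linarith
    _ ≤ 2 * q / m * ((q - 1) / (μ - 1)) :=
        le_mul_of_one_le_right (by have := hm; positivity)
          ((one_le_div (by linarith)).2 (by linarith))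
    _ = 2 / (m * (μ - 1)) * -(q - q ^ 2) := by
        field_simp [hm.ne', (sub_pos.2 hμ).ne']
        ring
end

section
/- Let L₁, L₂ ∈ (2π, 4π) satisfy (2π/L₁)² + (2π/L₂)² > 1, define σ(k,j) := −((2πk/L₁)² + (2πj/L₂)²)² + (2πk/L₁)² + (2πj/L₂)², let A := {(0,0), (±1,0), (±2,0), (0,±1), (0,±2)} ⊂ ℤ², and let K₁ > 0 satisfy 1 + |k| + |j| ≤ K₁ · (−σ(k,j)) for all (k,j) ∈ ℤ² \ A. Let ρ ≥ 0 and let h : ℤ² \ A → ([0,∞) → ℂ) be a family of continuous bounded functions with N_h := ∑_{(k,j)∈ℤ²\A} e^{ρ(|k|+|j|)} sup_{t≥0} |h_{k,j}(t)| < ∞. Define u_{k,j}(t) := ∫₀ᵗ e^{σ(k,j)(t−s)} h_{k,j}(s) ds for (k,j) ∈ ℤ² \ A and t ≥ 0. Then ∑_{(k,j)∈ℤ²\A} e^{ρ(|k|+|j|)} (1+|k|+|j|) sup_{t≥0} |u_{k,j}(t)| ≤ K₁ · N_h. -/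
open Real

/-!
Each mode decouples: `u_p(t) = ∫₀ᵗ e^{σ(p)(t-s)} h_p(s) ds` with `σ(p) < 0`, so
`|u_p(t)| ≤ sup|h_p| · ∫₀ᵗ e^{σ(p)(t-s)} ds ≤ sup|h_p| / (-σ(p))`. The hypothesis on `K₁`
trades the factor `1 + |k| + |j|` for `K₁ · (-σ(p))`, which cancels the `1 / (-σ(p))`;
summing the resulting termwise bound over the modes gives the claim.
-/

theorem integral_exp_mul_sub_le {σ : ℝ} (hσ : σ < 0) (t : ℝ) :
    ∫ s in (0 : ℝ)..t, exp (σ * (t - s)) ≤ 1 / -σ := by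
  have hderiv : ∀ s, HasDerivAt (fun s => exp (σ * (t - s)) / -σ) (exp (σ * (t - s))) s := by
    intro s
    refine ((((hasDerivAt_id s).const_sub t).const_mul σ).exp.div_const (-σ)).congr_deriv ?_
    field_simp [hσ.ne]
    simp
  have hcont : Continuous fun s => exp (σ * (t - s)) := by fun_prop
  calc ∫ s in (0 : ℝ)..t, exp (σ * (t - s))
      = (1 - exp (σ * t)) / -σ := by
        rw [intervalIntegral.integral_eq_sub_of_hasDerivAt (fun s _ => hderiv s)
          (hcont.intervalIntegrable _ _), sub_self, mul_zero, exp_zero, sub_zero, sub_div]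
    _ ≤ 1 / -σ := by gcongr <;> linarith [exp_pos (σ * t)]

theorem norm_integral_exp_mul_sub_mul_le {σ : ℝ} (hσ : σ < 0) {g : ℝ → ℂ} {M : ℝ}
    (hM : ∀ s, 0 ≤ s → ‖g s‖ ≤ M) {t : ℝ} (ht : 0 ≤ t) :
    ‖∫ s in (0 : ℝ)..t, (exp (σ * (t - s)) : ℂ) * g s‖ ≤ M / -σ := by
  have hM₀ : 0 ≤ M := (norm_nonneg _).trans (hM 0 le_rfl)
  calc ‖∫ s in (0 : ℝ)..t, (exp (σ * (t - s)) : ℂ) * g s‖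
      ≤ ∫ s in (0 : ℝ)..t, exp (σ * (t - s)) * M := by
        refine intervalIntegral.norm_integral_le_of_norm_le ht
          (Filter.Eventually.of_forall fun s hs => ?_)
          ((Continuous.intervalIntegrable (by fun_prop)) _ _)
        rw [norm_mul, Complex.norm_real, norm_of_nonneg (exp_pos _).le]
        exact mul_le_mul_of_nonneg_left (hM s hs.1.le) (exp_pos _).le
    _ = (∫ s in (0 : ℝ)..t, exp (σ * (t - s))) * M := intervalIntegral.integral_mul_const _ _
    _ ≤ 1 / -σ * M := mul_le_mul_of_nonneg_right (integral_exp_mul_sub_le hσ t) hM₀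
    _ = M / -σ := by ring

theorem iSup_norm_integral_exp_mul_sub_mul_le {σ : ℝ} (hσ : σ < 0) {g : ℝ → ℂ}
    (hg : BddAbove (Set.range fun t : {t : ℝ // 0 ≤ t} => ‖g t.1‖)) :
    ⨆ t : {t : ℝ // 0 ≤ t}, ‖∫ s in (0 : ℝ)..t.1, (exp (σ * (t.1 - s)) : ℂ) * g s‖ ≤
      (⨆ t : {t : ℝ // 0 ≤ t}, ‖g t.1‖) / -σ :=
  Real.iSup_le
    (fun t => norm_integral_exp_mul_sub_mul_le hσ (fun s hs => le_ciSup hg ⟨s, hs⟩) t.2)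
    (div_nonneg (Real.iSup_nonneg fun _ => norm_nonneg _) (neg_nonneg.mpr hσ.le))

theorem mul_iSup_norm_integral_exp_mul_sub_mul_le {σ c K : ℝ} (hK : 0 < K) (hc : 0 < c)
    (hcK : c ≤ K * -σ) {g : ℝ → ℂ}
    (hg : BddAbove (Set.range fun t : {t : ℝ // 0 ≤ t} => ‖g t.1‖)) :
    c * ⨆ t : {t : ℝ // 0 ≤ t}, ‖∫ s in (0 : ℝ)..t.1, (exp (σ * (t.1 - s)) : ℂ) * g s‖ ≤
      K * ⨆ t : {t : ℝ // 0 ≤ t}, ‖g t.1‖ := by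
  have hσ : 0 < -σ := pos_of_mul_pos_right (hc.trans_le hcK) hK.le
  calc c * ⨆ t : {t : ℝ // 0 ≤ t}, ‖∫ s in (0 : ℝ)..t.1, (exp (σ * (t.1 - s)) : ℂ) * g s‖
      ≤ K * -σ * ((⨆ t : {t : ℝ // 0 ≤ t}, ‖g t.1‖) / -σ) :=
        mul_le_mul hcK (iSup_norm_integral_exp_mul_sub_mul_le (neg_pos.mp hσ) hg)
          (Real.iSup_nonneg fun _ => norm_nonneg _) (by positivity)
    _ = K * ⨆ t : {t : ℝ // 0 ≤ t}, ‖g t.1‖ := by rw [mul_assoc, mul_div_cancel₀ _ hσ.ne']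

theorem tsum_le_mul_tsum_of_nonneg_of_le {ι : Type*} {f g : ι → ℝ} {c : ℝ}
    (hf : ∀ i, 0 ≤ f i) (hfg : ∀ i, f i ≤ c * g i) (hg : Summable g) :
    ∑' i, f i ≤ c * ∑' i, g i := by
  have hcg : Summable fun i => c * g i := hg.mul_left c
  rw [← tsum_mul_left]
  exact (hcg.of_nonneg_of_le hf hfg).tsum_le_tsum hfg hcg

theorem stmt_13_general (L₁ L₂ : ℝ) (K₁ : ℝ) (hK₁pos : 0 < K₁)
    (hK₁ : ∀ p : ℤ × ℤ, p ∉ ksLowModes →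
      1 + |(p.1 : ℝ)| + |(p.2 : ℝ)| ≤ K₁ * (-(ksSymbol L₁ L₂ p)))
    (ρ : ℝ) (h : ℤ × ℤ → ℝ → ℂ)
    (hbdd : ∀ p : {p : ℤ × ℤ // p ∉ ksLowModes},
      BddAbove (Set.range fun t : {t : ℝ // 0 ≤ t} => ‖h p.1 t.1‖))
    (hsumm : Summable (fun p : {p : ℤ × ℤ // p ∉ ksLowModes} =>
      Real.exp (ρ * (|(p.1.1 : ℝ)| + |(p.1.2 : ℝ)|)) *
        ⨆ t : {t : ℝ // 0 ≤ t}, ‖h p.1 t.1‖)) :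
    (∑' p : {p : ℤ × ℤ // p ∉ ksLowModes},
        Real.exp (ρ * (|(p.1.1 : ℝ)| + |(p.1.2 : ℝ)|)) *
          (1 + |(p.1.1 : ℝ)| + |(p.1.2 : ℝ)|) *
          ⨆ t : {t : ℝ // 0 ≤ t},
            ‖∫ s in (0:ℝ)..(t.1),
              (Real.exp (ksSymbol L₁ L₂ p.1 * (t.1 - s)) : ℂ) * h p.1 s‖) ≤
      K₁ * ∑' p : {p : ℤ × ℤ // p ∉ ksLowModes},
        Real.exp (ρ * (|(p.1.1 : ℝ)| + |(p.1.2 : ℝ)|)) *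
          ⨆ t : {t : ℝ // 0 ≤ t}, ‖h p.1 t.1‖ := by
  refine tsum_le_mul_tsum_of_nonneg_of_le (fun p => ?_) (fun p => ?_) hsumm
  · exact mul_nonneg (by positivity) (Real.iSup_nonneg fun _ => norm_nonneg _)
  · rw [mul_assoc, mul_left_comm K₁]
    exact mul_le_mul_of_nonneg_left (mul_iSup_norm_integral_exp_mul_sub_mul_le hK₁pos
      (by positivity) (hK₁ p.1 p.2) (hbdd p)) (exp_pos _).le

/-- The Duhamel integral operator `I⁺` is bounded from `𝓑⁰_ρ` to `𝓑¹_ρ`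
with norm at most `K₁`. -/
theorem stmt_13 (L₁ L₂ : ℝ) (hL₁ : 2 * π < L₁) (hL₁' : L₁ < 4 * π)
    (hL₂ : 2 * π < L₂) (hL₂' : L₂ < 4 * π)
    (hsum : (2 * π / L₁) ^ 2 + (2 * π / L₂) ^ 2 > 1)
    (K₁ : ℝ) (hK₁pos : 0 < K₁)
    (hK₁ : ∀ p : ℤ × ℤ, p ∉ ksLowModes →
      1 + |(p.1 : ℝ)| + |(p.2 : ℝ)| ≤ K₁ * (-(ksSymbol L₁ L₂ p)))
    (ρ : ℝ) (hρ : 0 ≤ ρ) (h : ℤ × ℤ → ℝ → ℂ)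
    (hcont : ∀ p : {p : ℤ × ℤ // p ∉ ksLowModes}, Continuous (h p.1))
    (hbdd : ∀ p : {p : ℤ × ℤ // p ∉ ksLowModes},
      BddAbove (Set.range fun t : {t : ℝ // 0 ≤ t} => ‖h p.1 t.1‖))
    (hsumm : Summable (fun p : {p : ℤ × ℤ // p ∉ ksLowModes} =>
      Real.exp (ρ * (|(p.1.1 : ℝ)| + |(p.1.2 : ℝ)|)) *
        ⨆ t : {t : ℝ // 0 ≤ t}, ‖h p.1 t.1‖)) :
    (∑' p : {p : ℤ × ℤ // p ∉ ksLowModes},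
        Real.exp (ρ * (|(p.1.1 : ℝ)| + |(p.1.2 : ℝ)|)) *
          (1 + |(p.1.1 : ℝ)| + |(p.1.2 : ℝ)|) *
          ⨆ t : {t : ℝ // 0 ≤ t},
            ‖∫ s in (0:ℝ)..(t.1),
              (Real.exp (ksSymbol L₁ L₂ p.1 * (t.1 - s)) : ℂ) * h p.1 s‖) ≤
      K₁ * ∑' p : {p : ℤ × ℤ // p ∉ ksLowModes},
        Real.exp (ρ * (|(p.1.1 : ℝ)| + |(p.1.2 : ℝ)|)) *
          ⨆ t : {t : ℝ // 0 ≤ t}, ‖h p.1 t.1‖ :=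
  stmt_13_general L₁ L₂ K₁ hK₁pos hK₁ ρ h hbdd hsumm
end

section
/- Fix ρ > 0. Let L₁, L₂ ∈ (2π, 4π) with (2π/L₁)² + (2π/L₂)² > 1, and define εᵢ, Bᵢ, M_{1,i} := 12 Bᵢ Lᵢ⁴/π⁴, M_{2,i} := 8π² M_{1,i}/Lᵢ², σ(k,j), A := {(0,0), (±1,0), (±2,0), (0,±1), (0,±2)}, K₁, K₂, and M₃ := 12 K₁ K₂ · max(M_{1,1}^{1/2} M_{2,1}, M_{1,2}^{1/2} M_{2,2}) as in the iterative scheme for the two-dimensional Kuramoto–Sivashinsky equation, and set K := 3 M_{1,1}^{1/2} M₃ K₂ e^{−ρ}. Then there exists ε* > 0 (depending only on ρ, L₁, L₂) such that for every ε ∈ (0, ε*) the following holds. Suppose a₁, a₂ : [0,∞) → ℝ satisfy sup_{t≥0}|a₁(t)| ≤ 2(M_{1,1} ε)^{1/2} and sup_{t≥0}|a₂(t)| ≤ M_{2,1} ε, and suppose v : ℤ² \ A → ([0,∞) → ℝ) satisfies ∑_{(k,j)∈ℤ²\A} e^{ρ(|k|+|j|)}(1+|k|+|j|) sup_{t≥0}|v_{k,j}(t)|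 ≤ M₃ ε^{3/2}. Let w(·,·,t) be the function on the torus with Fourier coefficients v, and let F(t) denote the coefficient of cos(2πx/L₁) in the Fourier expansion of Ψ₃ + Ψ₅ + Ψ₆ at time t, where Ψ₃ := (∂ₓw)², Ψ₅ := −(4π a₁(t)/L₁) sin(2πx/L₁) ∂ₓw, and Ψ₆ := −(8π a₂(t)/L₁) sin(4πx/L₁) ∂ₓw. Then sup_{t≥0} |F(t)| ≤ K ε². -/
open Real

/-- `B_i = (4π/L)⁴ − (4π/L)²`. -/
noncomputable def ksB (L : ℝ) : ℝ := (4 * π / L) ^ 4 - (4 * π / L) ^ 2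

/-- `M_{1,i} = 12 B_i L⁴ / π⁴`. -/
noncomputable def ksM₁ (L : ℝ) : ℝ := 12 * ksB L * L ^ 4 / π ^ 4

/-- `M_{2,i} = 8π² M_{1,i} / L²`. -/
noncomputable def ksM₂ (L : ℝ) : ℝ := 8 * π ^ 2 * ksM₁ L / L ^ 2

/-- `K₂` is the maximum of the eight explicit `𝓑⁰_ρ`-norms of the trigonometric
profiles appearing in the scheme. -/
noncomputable def ksK₂ (ρ L₁ L₂ : ℝ) : ℝ :=
  max
    (max (max ((8 * π ^ 2 / L₁ ^ 2) * (Real.exp ρ + Real.exp (3 * ρ)))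
              ((8 * π ^ 2 / L₁ ^ 2) * (1 + Real.exp (4 * ρ))))
         (max ((4 * π / L₁) * Real.exp ρ) ((8 * π / L₁) * Real.exp (2 * ρ))))
    (max (max ((8 * π ^ 2 / L₂ ^ 2) * (Real.exp ρ + Real.exp (3 * ρ)))
              ((8 * π ^ 2 / L₂ ^ 2) * (1 + Real.exp (4 * ρ))))
         (max ((4 * π / L₂) * Real.exp ρ) ((8 * π / L₂) * Real.exp (2 * ρ))))

/-- The exponential Fourier coefficients of `∂ₓ w`, where `w` has real
coefficients `v` on the torus `[0,L₁] × [0,L₂]`. -/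
noncomputable def ksDx (L₁ : ℝ) (v : ℤ × ℤ → ℝ → ℝ) (p : ℤ × ℤ) (t : ℝ) : ℂ :=
  2 * (π : ℂ) * Complex.I * (p.1 : ℂ) / (L₁ : ℂ) * (v p t : ℂ)

/-- The exponential Fourier coefficients of `sin(2πx/L₁)`. -/
noncomputable def ksSin1 (p : ℤ × ℤ) : ℂ :=
  if p = (1, 0) then 1 / (2 * Complex.I)
  else if p = (-1, 0) then -(1 / (2 * Complex.I)) else 0

/-- The exponential Fourier coefficients of `sin(4πx/L₁)`. -/
noncomputable def ksSin2 (p : ℤ × ℤ) : ℂ :=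
  if p = (2, 0) then 1 / (2 * Complex.I)
  else if p = (-2, 0) then -(1 / (2 * Complex.I)) else 0

/-- Twice the `(1,0)` exponential Fourier coefficient of `Ψ₃ + Ψ₅ + Ψ₆`, i.e. the
coefficient of `cos(2πx/L₁)`, where `Ψ₃ = (∂ₓw)²`,
`Ψ₅ = −(4π a₁/L₁) sin(2πx/L₁) ∂ₓw` and `Ψ₆ = −(8π a₂/L₁) sin(4πx/L₁) ∂ₓw`. -/
noncomputable def ksForcing (L₁ : ℝ) (a₁ a₂ : ℝ → ℝ) (v : ℤ × ℤ → ℝ → ℝ)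
    (t : ℝ) : ℂ :=
  2 * ((∑' q : ℤ × ℤ, ksDx L₁ v ((1, 0) - q) t * ksDx L₁ v q t)
    + (-(4 * (π : ℂ) * (a₁ t : ℂ) / (L₁ : ℂ))) *
        (∑' q : ℤ × ℤ, ksSin1 ((1, 0) - q) * ksDx L₁ v q t)
    + (-(8 * (π : ℂ) * (a₂ t : ℂ) / (L₁ : ℂ))) *
        (∑' q : ℤ × ℤ, ksSin2 ((1, 0) - q) * ksDx L₁ v q t))

/-!
Only two of the three quadratic interactions survive at the mode `(1,0)`. The product of
`sin(2πx/L₁)` with `∂ₓw` reaches `(1,0)` only through the modes `(0,0)` and `(2,0)` of `w`,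
where `∂ₓw` vanishes, and the product of `sin(4πx/L₁)` with `∂ₓw` only through `(-1,0)`, where
`w` vanishes, and `(3,0)`. The remaining convolution `(∂ₓw)²` is bounded by the square of the
weighted norm `G = ∑ e^{ρ(|k|+|j|)} (1+|k|+|j|) sup_t |v_{k,j}|`, with an extra factor `e^{-ρ}`
because the `x`-frequencies of two modes adding up to `(1,0)` are not both zero. Hence
`|F| ≲ e^{-ρ} G (G + |a₂|) = O(ε^{5/2})`, which is below `K ε²` once `ε` is small.
-/

open Filter Topology

lemma norm_tsum_le_mul_tsum_sq {ι E : Type*} [SeminormedAddCommGroup E] {f : ι → E}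
    {g : ι → ℝ} {σ : ι → ι} {C : ℝ} (hC : 0 ≤ C) (hg : ∀ i, 0 ≤ g i) (hgs : Summable g)
    (hf : ∀ i, ‖f i‖ ≤ C * (g (σ i) * g i)) :
    ‖∑' i, f i‖ ≤ C * (∑' i, g i) ^ 2 := by
  refine (tsum_of_norm_bounded (hgs.hasSum.mul_left (C * ∑' j, g j)) fun i => ?_).trans_eq
    (by ring)
  calc ‖f i‖ ≤ C * (g (σ i) * g i) := hf i
    _ ≤ C * ((∑' j, g j) * g i) := by
        gcongr
        · exact hg i
        · exact hgs.le_tsum _ fun j _ => hg j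
    _ = C * (∑' j, g j) * g i := by ring

noncomputable def ksWeightedSup (ρ : ℝ) (v : ℤ × ℤ → ℝ → ℝ) (p : ℤ × ℤ) : ℝ :=
  Real.exp (ρ * (|(p.1 : ℝ)| + |(p.2 : ℝ)|)) * (1 + |(p.1 : ℝ)| + |(p.2 : ℝ)|) *
    ⨆ t : {t : ℝ // 0 ≤ t}, |v p t.1|

section WeightedSup

variable (ρ : ℝ) (v : ℤ × ℤ → ℝ → ℝ)

lemma ksWeightedSup_nonneg (p : ℤ × ℤ) : 0 ≤ ksWeightedSup ρ v p :=
  mul_nonneg (by positivity) (Real.iSup_nonneg fun _ => abs_nonneg _)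

lemma support_ksWeightedSup_subset (hv : ∀ p ∈ ksLowModes, ∀ t, v p t = 0) :
    Function.support (ksWeightedSup ρ v) ⊆ ksLowModesᶜ := by
  intro p hp hlow
  simp [ksWeightedSup, hv p hlow] at hp

variable {ρ v}

lemma abs_mul_abs_le_ksWeightedSup {p : ℤ × ℤ}
    (hbdd : BddAbove (Set.range fun t : {t : ℝ // 0 ≤ t} => |v p t.1|)) {t : ℝ} (ht : 0 ≤ t) :
    |(p.1 : ℝ)| * |v p t| ≤
      Real.exp (-(ρ * (|(p.1 : ℝ)| + |(p.2 : ℝ)|))) * ksWeightedSup ρ v p := by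
  have hsup : |v p t| ≤ ⨆ t : {t : ℝ // 0 ≤ t}, |v p t.1| := le_ciSup hbdd ⟨t, ht⟩
  have hexp : Real.exp (-(ρ * (|(p.1 : ℝ)| + |(p.2 : ℝ)|))) *
      Real.exp (ρ * (|(p.1 : ℝ)| + |(p.2 : ℝ)|)) = 1 := by
    rw [← Real.exp_add, neg_add_cancel, Real.exp_zero]
  calc |(p.1 : ℝ)| * |v p t|
      ≤ (1 + |(p.1 : ℝ)| + |(p.2 : ℝ)|) * ⨆ t : {t : ℝ // 0 ≤ t}, |v p t.1| := by
        gcongr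
        linarith [abs_nonneg (p.2 : ℝ)]
    _ = Real.exp (-(ρ * (|(p.1 : ℝ)| + |(p.2 : ℝ)|))) * ksWeightedSup ρ v p := by
        rw [ksWeightedSup, ← mul_assoc, ← mul_assoc, hexp, one_mul]

end WeightedSup

section Forcing

variable {ρ L : ℝ} {v : ℤ × ℤ → ℝ → ℝ} {t : ℝ}

lemma norm_ksDx (hL : 0 < L) (p : ℤ × ℤ) :
    ‖ksDx L v p t‖ = 2 * π / L * (|(p.1 : ℝ)| * |v p t|) := by
  simp [ksDx, Complex.norm_intCast, abs_of_pos pi_pos, abs_of_pos hL]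
  ring

lemma norm_ksDx_le (hL : 0 < L) {p : ℤ × ℤ}
    (hbdd : BddAbove (Set.range fun t : {t : ℝ // 0 ≤ t} => |v p t.1|)) (ht : 0 ≤ t) :
    ‖ksDx L v p t‖ ≤
      2 * π / L * (Real.exp (-(ρ * (|(p.1 : ℝ)| + |(p.2 : ℝ)|))) * ksWeightedSup ρ v p) := by
  rw [norm_ksDx hL]
  exact mul_le_mul_of_nonneg_left (abs_mul_abs_le_ksWeightedSup hbdd ht) (by positivity)

lemma norm_ksDx_mul_ksDx_le (hρ : 0 ≤ ρ) (hL : 0 < L)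
    (hbdd : ∀ p, BddAbove (Set.range fun t : {t : ℝ // 0 ≤ t} => |v p t.1|)) (ht : 0 ≤ t)
    (q : ℤ × ℤ) :
    ‖ksDx L v ((1, 0) - q) t * ksDx L v q t‖ ≤
      (2 * π / L) ^ 2 * Real.exp (-ρ) *
        (ksWeightedSup ρ v ((1, 0) - q) * ksWeightedSup ρ v q) := by
  set p := ((1, 0) : ℤ × ℤ) - q with hp
  have hdecay : Real.exp (-(ρ * (|(p.1 : ℝ)| + |(p.2 : ℝ)|))) *
      Real.exp (-(ρ * (|(q.1 : ℝ)| + |(q.2 : ℝ)|))) ≤ Real.exp (-ρ) := by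
    have hfreq : (1 : ℝ) ≤ |(p.1 : ℝ)| + |(q.1 : ℝ)| := by
      have : (p.1 : ℝ) + q.1 = 1 := by simp [hp]
      linarith [abs_add_le (p.1 : ℝ) q.1, le_abs_self ((p.1 : ℝ) + q.1)]
    rw [← Real.exp_add, Real.exp_le_exp]
    nlinarith [abs_nonneg (p.2 : ℝ), abs_nonneg (q.2 : ℝ)]
  have hWp := ksWeightedSup_nonneg ρ v p
  have hWq := ksWeightedSup_nonneg ρ v q
  calc ‖ksDx L v p t * ksDx L v q t‖
      ≤ 2 * π / L * (Real.exp (-(ρ * (|(p.1 : ℝ)| + |(p.2 : ℝ)|))) * ksWeightedSup ρ v p) *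
        (2 * π / L * (Real.exp (-(ρ * (|(q.1 : ℝ)| + |(q.2 : ℝ)|))) * ksWeightedSup ρ v q)) := by
        rw [norm_mul]
        exact mul_le_mul (norm_ksDx_le hL (hbdd p) ht) (norm_ksDx_le hL (hbdd q) ht)
          (norm_nonneg _) (by positivity)
    _ = (2 * π / L) ^ 2 * (Real.exp (-(ρ * (|(p.1 : ℝ)| + |(p.2 : ℝ)|))) *
          Real.exp (-(ρ * (|(q.1 : ℝ)| + |(q.2 : ℝ)|)))) *
          (ksWeightedSup ρ v p * ksWeightedSup ρ v q) := by ring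
    _ ≤ (2 * π / L) ^ 2 * Real.exp (-ρ) *
          (ksWeightedSup ρ v p * ksWeightedSup ρ v q) := by gcongr

lemma tsum_ksSin1_mul_ksDx (hv : v (2, 0) t = 0) :
    ∑' q : ℤ × ℤ, ksSin1 ((1, 0) - q) * ksDx L v q t = 0 := by
  refine (tsum_congr fun q => ?_).trans tsum_zero
  obtain ⟨k, j⟩ := q
  unfold ksSin1
  split_ifs with h₁ h₂
  · obtain rfl : k = 0 := by simp [Prod.ext_iff] at h₁; omega
    simp [ksDx]
  · obtain ⟨rfl, rfl⟩ : k = 2 ∧ j = 0 := by simp [Prod.ext_iff] at h₂; omega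
    simp [ksDx, hv]
  · exact zero_mul _

lemma tsum_ksSin2_mul_ksDx (hv : v (-1, 0) t = 0) :
    ∑' q : ℤ × ℤ, ksSin2 ((1, 0) - q) * ksDx L v q t =
      -(1 / (2 * Complex.I)) * ksDx L v (3, 0) t := by
  rw [tsum_eq_single (3, 0)]
  · norm_num [ksSin2]
  rintro ⟨k, j⟩ hq
  unfold ksSin2
  split_ifs with h₁ h₂
  · obtain ⟨rfl, rfl⟩ : k = -1 ∧ j = 0 := by simp [Prod.ext_iff] at h₁; omega
    simp [ksDx, hv]
  · simp [Prod.ext_iff] at h₂ hq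
    omega
  · exact zero_mul _

lemma norm_tsum_ksSin2_mul_ksDx_le (hρ : 0 ≤ ρ) (hL : 0 < L) (hv : v (-1, 0) t = 0)
    (hbdd : ∀ p, BddAbove (Set.range fun t : {t : ℝ // 0 ≤ t} => |v p t.1|))
    (hW : Summable (ksWeightedSup ρ v)) (ht : 0 ≤ t) :
    ‖∑' q : ℤ × ℤ, ksSin2 ((1, 0) - q) * ksDx L v q t‖ ≤
      π / L * Real.exp (-ρ) * ∑' p, ksWeightedSup ρ v p := by
  rw [tsum_ksSin2_mul_ksDx hv, norm_mul, norm_ksDx hL]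
  have h3 := abs_mul_abs_le_ksWeightedSup (ρ := ρ) (hbdd (3, 0)) ht
  have hdecay : Real.exp (-(ρ * (|(3 : ℝ)| + |(0 : ℝ)|))) ≤ Real.exp (-ρ) := by
    rw [Real.exp_le_exp]; norm_num; linarith
  have hWG : ksWeightedSup ρ v (3, 0) ≤ ∑' p, ksWeightedSup ρ v p :=
    hW.le_tsum _ fun p _ => ksWeightedSup_nonneg ρ v p
  simp only [Int.cast_ofNat, Int.cast_zero] at h3 ⊢
  calc ‖-(1 / (2 * Complex.I))‖ * (2 * π / L * (|(3 : ℝ)| * |v (3, 0) t|))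
      = π / L * (|(3 : ℝ)| * |v (3, 0) t|) := by simp; ring
    _ ≤ π / L * (Real.exp (-ρ) * ∑' p, ksWeightedSup ρ v p) :=
      mul_le_mul_of_nonneg_left
        (h3.trans (mul_le_mul hdecay hWG (ksWeightedSup_nonneg ρ v _) (by positivity)))
        (by positivity)
    _ = π / L * Real.exp (-ρ) * ∑' p, ksWeightedSup ρ v p := by ring

lemma norm_ksForcing_le (hρ : 0 ≤ ρ) (hL : 0 < L) (a₁ a₂ : ℝ → ℝ)
    (hv : ∀ p ∈ ksLowModes, ∀ t, v p t = 0)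
    (hbdd : ∀ p, BddAbove (Set.range fun t : {t : ℝ // 0 ≤ t} => |v p t.1|))
    (hW : Summable (ksWeightedSup ρ v)) (ht : 0 ≤ t) :
    ‖ksForcing L a₁ a₂ v t‖ ≤ Real.exp (-ρ) *
      (8 * (π / L) ^ 2 * (∑' p, ksWeightedSup ρ v p) *
        ((∑' p, ksWeightedSup ρ v p) + 2 * |a₂ t|)) := by
  set G := ∑' p, ksWeightedSup ρ v p
  have hG : 0 ≤ G := tsum_nonneg (ksWeightedSup_nonneg ρ v)
  have hconv : ‖∑' q : ℤ × ℤ, ksDx L v ((1, 0) - q) t * ksDx L v q t‖ ≤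
      (2 * π / L) ^ 2 * Real.exp (-ρ) * G ^ 2 :=
    norm_tsum_le_mul_tsum_sq (by positivity) (ksWeightedSup_nonneg ρ v) hW
      (norm_ksDx_mul_ksDx_le hρ hL hbdd ht)
  have hsin2 := norm_tsum_ksSin2_mul_ksDx_le hρ hL (hv _ (by simp [ksLowModes]) t) hbdd hW ht
  have hcoeff : ‖-(8 * (π : ℂ) * (a₂ t : ℂ) / (L : ℂ))‖ = 8 * π * |a₂ t| / L := by
    simp [abs_of_pos pi_pos, abs_of_pos hL]
  rw [ksForcing, tsum_ksSin1_mul_ksDx (hv _ (by simp [ksLowModes]) t), mul_zero, add_zero]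
  calc _ ≤ 2 * (‖∑' q : ℤ × ℤ, ksDx L v ((1, 0) - q) t * ksDx L v q t‖ +
        8 * π * |a₂ t| / L * ‖∑' q : ℤ × ℤ, ksSin2 ((1, 0) - q) * ksDx L v q t‖) := by
        rw [norm_mul, Complex.norm_two, ← hcoeff, ← norm_mul]
        gcongr
        exact norm_add_le _ _
    _ ≤ 2 * ((2 * π / L) ^ 2 * Real.exp (-ρ) * G ^ 2 +
        8 * π * |a₂ t| / L * (π / L * Real.exp (-ρ) * G)) := by gcongr
    _ = _ := by ring

end Forcing

section Constants

lemma ksB_pos {L : ℝ} (hL : 0 < L) (hL' : L < 4 * π) : 0 < ksB L := by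
  have h : 1 < 4 * π / L := by rw [one_lt_div hL]; exact hL'
  have h2 : 1 < (4 * π / L) ^ 2 := one_lt_pow₀ h two_ne_zero
  rw [ksB, show (4 * π / L) ^ 4 = ((4 * π / L) ^ 2) ^ 2 by ring]
  nlinarith

lemma ksM₁_pos {L : ℝ} (hL : 0 < L) (hL' : L < 4 * π) : 0 < ksM₁ L := by
  have := ksB_pos hL hL'
  unfold ksM₁
  positivity

lemma ksK₂_pos (ρ : ℝ) {L₁ : ℝ} (hL₁ : 0 < L₁) (L₂ : ℝ) : 0 < ksK₂ ρ L₁ L₂ :=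
  lt_of_lt_of_le (by positivity)
    ((le_max_left _ _).trans ((le_max_right _ _).trans (le_max_left _ _)) :
      4 * π / L₁ * Real.exp ρ ≤ ksK₂ ρ L₁ L₂)

end Constants

lemma eventually_mul_sqrt_mul_lt (a b c : ℝ) {K : ℝ} (hK : 0 < K) :
    ∀ᶠ ε in 𝓝[>] (0 : ℝ), c * √ε * (a * √ε + b) < K := by
  have hcont : Continuous fun ε : ℝ => c * √ε * (a * √ε + b) := by fun_prop
  have hlim := hcont.tendsto 0
  simp only [Real.sqrt_zero, mul_zero, zero_mul] at hlim
  exact (hlim.eventually_lt_const hK).filter_mono nhdsWithin_le_nhds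

lemma mul_mul_add_le_of_le_mul_sqrt {G a c K M₂ M₃ ε : ℝ} (hc : 0 ≤ c) (ha : 0 ≤ a) (hε : 0 < ε)
    (hG₀ : 0 ≤ G) (hG : G ≤ M₃ * (ε * √ε)) (ha' : a ≤ M₂ * ε)
    (hsmall : c * √ε * (M₃ * √ε + 2 * M₂) ≤ K) :
    c * G * (G + 2 * a) ≤ K * M₃ * ε ^ 2 := by
  have hs : 0 < √ε := Real.sqrt_pos.mpr hε
  have hM₃ : 0 ≤ M₃ := nonneg_of_mul_nonneg_left (hG₀.trans hG) (by positivity)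
  calc c * G * (G + 2 * a) ≤ c * (M₃ * (ε * √ε)) * (M₃ * (ε * √ε) + 2 * (M₂ * ε)) := by
        gcongr
    _ = M₃ * ε ^ 2 * (c * √ε * (M₃ * √ε + 2 * M₂)) := by ring
    _ ≤ M₃ * ε ^ 2 * K := by gcongr
    _ = K * M₃ * ε ^ 2 := by ring

theorem stmt_16_general (ρ : ℝ) (hρ : 0 < ρ) (L₁ L₂ : ℝ)
    (hL₁ : 2 * π < L₁) (hL₁' : L₁ < 4 * π)
    (K₁ : ℝ) :
    ∃ εstar : ℝ, 0 < εstar ∧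
      ∀ ε : ℝ, 0 < ε → ε < εstar →
        ∀ (a₁ a₂ : ℝ → ℝ) (v : ℤ × ℤ → ℝ → ℝ),
          (∀ t : ℝ, 0 ≤ t → |a₁ t| ≤ 2 * Real.sqrt (ksM₁ L₁ * ε)) →
          (∀ t : ℝ, 0 ≤ t → |a₂ t| ≤ ksM₂ L₁ * ε) →
          (∀ p ∈ ksLowModes, ∀ t : ℝ, v p t = 0) →
          (∀ p : ℤ × ℤ,
            BddAbove (Set.range fun t : {t : ℝ // 0 ≤ t} => |v p t.1|)) →
          Summable (fun p : {p : ℤ × ℤ // p ∉ ksLowModes} =>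
            Real.exp (ρ * (|(p.1.1 : ℝ)| + |(p.1.2 : ℝ)|)) *
              (1 + |(p.1.1 : ℝ)| + |(p.1.2 : ℝ)|) *
              ⨆ t : {t : ℝ // 0 ≤ t}, |v p.1 t.1|) →
          (∑' p : {p : ℤ × ℤ // p ∉ ksLowModes},
              Real.exp (ρ * (|(p.1.1 : ℝ)| + |(p.1.2 : ℝ)|)) *
                (1 + |(p.1.1 : ℝ)| + |(p.1.2 : ℝ)|) *
                ⨆ t : {t : ℝ // 0 ≤ t}, |v p.1 t.1|) ≤
            (12 * K₁ * ksK₂ ρ L₁ L₂ *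
              max (Real.sqrt (ksM₁ L₁) * ksM₂ L₁) (Real.sqrt (ksM₁ L₂) * ksM₂ L₂))
              * ε ^ ((3 : ℝ) / 2) →
          ∀ t : ℝ, 0 ≤ t →
            ‖ksForcing L₁ a₁ a₂ v t‖ ≤
              (3 * Real.sqrt (ksM₁ L₁) *
                (12 * K₁ * ksK₂ ρ L₁ L₂ *
                  max (Real.sqrt (ksM₁ L₁) * ksM₂ L₁)
                    (Real.sqrt (ksM₁ L₂) * ksM₂ L₂)) *
                ksK₂ ρ L₁ L₂ * Real.exp (-ρ)) * ε ^ 2 := by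
  have hL : 0 < L₁ := by linarith [pi_pos]
  set M₃ := 12 * K₁ * ksK₂ ρ L₁ L₂ *
    max (Real.sqrt (ksM₁ L₁) * ksM₂ L₁) (Real.sqrt (ksM₁ L₂) * ksM₂ L₂)
  have hK : 0 < 3 * √(ksM₁ L₁) * ksK₂ ρ L₁ L₂ := by
    have := Real.sqrt_pos.mpr (ksM₁_pos hL hL₁')
    have := ksK₂_pos ρ hL L₂
    positivity
  obtain ⟨εstar, hεstar, hsmall⟩ := (nhdsGT_basis (0 : ℝ)).eventually_iff.mp
    (eventually_mul_sqrt_mul_lt M₃ (2 * ksM₂ L₁) (8 * (π / L₁) ^ 2) hK)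
  refine ⟨εstar, hεstar, fun ε hε hεlt a₁ a₂ v _ ha₂ hv hbdd hsum hnorm t ht => ?_⟩
  have hsupp := support_ksWeightedSup_subset ρ v hv
  have hW : Summable (ksWeightedSup ρ v) :=
    Set.indicator_eq_self.mpr hsupp ▸ summable_subtype_iff_indicator.mp hsum
  have hG : ∑' p, ksWeightedSup ρ v p ≤ M₃ * (ε * √ε) := by
    rw [← tsum_subtype_eq_of_support_subset hsupp, Real.sqrt_eq_rpow,
      ← Real.rpow_one_add' hε.le (by norm_num)]
    exact hnorm.trans_eq (by norm_num)
  calc ‖ksForcing L₁ a₁ a₂ v t‖ ≤ _ := norm_ksForcing_le hρ.le hL a₁ a₂ hv hbdd hW ht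
    _ ≤ Real.exp (-ρ) * (3 * √(ksM₁ L₁) * ksK₂ ρ L₁ L₂ * M₃ * ε ^ 2) :=
      mul_le_mul_of_nonneg_left (mul_mul_add_le_of_le_mul_sqrt (by positivity) (abs_nonneg _) hε
        (tsum_nonneg (ksWeightedSup_nonneg ρ v)) hG (ha₂ t ht) (hsmall ⟨hε, hεlt⟩).le)
        (Real.exp_pos _).le
    _ = _ := by ring

/-- The forcing term `F_{1,0,x}` in the equation for the growing mode `a_{1,0}`
is of size `K ε²`. -/
theorem stmt_16 (ρ : ℝ) (hρ : 0 < ρ) (L₁ L₂ : ℝ)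
    (hL₁ : 2 * π < L₁) (hL₁' : L₁ < 4 * π) (hL₂ : 2 * π < L₂) (hL₂' : L₂ < 4 * π)
    (hsum : (2 * π / L₁) ^ 2 + (2 * π / L₂) ^ 2 > 1)
    (K₁ : ℝ) (hK₁pos : 0 < K₁)
    (hK₁ : ∀ p : ℤ × ℤ, p ∉ ksLowModes →
      1 + |(p.1 : ℝ)| + |(p.2 : ℝ)| ≤ K₁ * (-(ksSymbol L₁ L₂ p))) :
    ∃ εstar : ℝ, 0 < εstar ∧
      ∀ ε : ℝ, 0 < ε → ε < εstar →
        ∀ (a₁ a₂ : ℝ → ℝ) (v : ℤ × ℤ → ℝ → ℝ),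
          (∀ t : ℝ, 0 ≤ t → |a₁ t| ≤ 2 * Real.sqrt (ksM₁ L₁ * ε)) →
          (∀ t : ℝ, 0 ≤ t → |a₂ t| ≤ ksM₂ L₁ * ε) →
          (∀ p ∈ ksLowModes, ∀ t : ℝ, v p t = 0) →
          (∀ p : ℤ × ℤ,
            BddAbove (Set.range fun t : {t : ℝ // 0 ≤ t} => |v p t.1|)) →
          Summable (fun p : {p : ℤ × ℤ // p ∉ ksLowModes} =>
            Real.exp (ρ * (|(p.1.1 : ℝ)| + |(p.1.2 : ℝ)|)) *
              (1 + |(p.1.1 : ℝ)| + |(p.1.2 : ℝ)|) *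
              ⨆ t : {t : ℝ // 0 ≤ t}, |v p.1 t.1|) →
          (∑' p : {p : ℤ × ℤ // p ∉ ksLowModes},
              Real.exp (ρ * (|(p.1.1 : ℝ)| + |(p.1.2 : ℝ)|)) *
                (1 + |(p.1.1 : ℝ)| + |(p.1.2 : ℝ)|) *
                ⨆ t : {t : ℝ // 0 ≤ t}, |v p.1 t.1|) ≤
            (12 * K₁ * ksK₂ ρ L₁ L₂ *
              max (Real.sqrt (ksM₁ L₁) * ksM₂ L₁) (Real.sqrt (ksM₁ L₂) * ksM₂ L₂))
              * ε ^ ((3 : ℝ) / 2) →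
          ∀ t : ℝ, 0 ≤ t →
            ‖ksForcing L₁ a₁ a₂ v t‖ ≤
              (3 * Real.sqrt (ksM₁ L₁) *
                (12 * K₁ * ksK₂ ρ L₁ L₂ *
                  max (Real.sqrt (ksM₁ L₁) * ksM₂ L₁)
                    (Real.sqrt (ksM₁ L₂) * ksM₂ L₂)) *
                ksK₂ ρ L₁ L₂ * Real.exp (-ρ)) * ε ^ 2 :=
  stmt_16_general ρ hρ L₁ L₂ hL₁ hL₁' K₁
end
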